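/- Let W be a non-identity element of the Apollonian group Ap, and suppose j ∈ {1,2,3,4} is such that W = S_j·W' where W' ∈ Ap has strictly smaller word length than W with respect to the generating set {S₁,S₂,S₃,S₄} (i.e. S_j is the leftmost letter of the reduced word for W). Write the j-th row of the matrix W·S_θ as (−t, u, v, w). Then t > 0, u > 0, and w > 0. -/

import Mathlib

open Matrix

/-- The Apollonian generators, indexed by `Fin 4`. -/
def S : Fin 4 → Matrix (Fin 4) (Fin 4) ℤ :=
  ![!![-1,2,2,2; 0,1,0,0; 0,0,1,0; 0,0,0,1],
    !![1,0,0,0; 2,-1,2,2; 0,0,1,0; 0,0,0,1],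
    !![1,0,0,0; 0,1,0,0; 2,2,-1,2; 0,0,0,1],
    !![1,0,0,0; 0,1,0,0; 0,0,1,0; 2,2,2,-1]]

/-- The Apollonian group: since each generator is an involution, the subgroup
generated by `S₁, S₂, S₃, S₄` consists of all finite products of the generators. -/
def Ap : Submonoid (Matrix (Fin 4) (Fin 4) ℤ) :=
  Submonoid.closure {S 0, S 1, S 2, S 3}

/-- The word length of an element of the Apollonian group with respect to the
generating set `{S₁, S₂, S₃, S₄}`: the least number of generators whose product
is the given matrix. -/
noncomputable def wordLength (W : Matrix (Fin 4) (Fin 4) ℤ) : ℕ :=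
  sInf {k | ∃ f : Fin k → Fin 4, W = (List.ofFn fun i => S (f i)).prod}

/-- The matrix `S_θ` implementing `θ`. -/
def Sθ : Matrix (Fin 4) (Fin 4) ℤ := !![1,0,0,0; -1,1,0,0; -1,0,0,1; -1,1,-1,1]

/-!
The generator `S j` acts on a column vector `v` by replacing `v j` with
`2 * (v 0 + v 1 + v 2 + v 3) - 3 * v j`. Call `v` leading at `k` if `v k ≥ 1` dominates every
entry and any two distinct entries have nonnegative sum. If `v` is leading at `k` and `j ≠ k`,
then `S j *ᵥ v` is leading at `j`: the two entries other than `v j, v k` have nonnegative sum,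
so the new entry is at least `2 * v k - v j ≥ v k`. For every `j`, the columns `-Sθ e₀`,
`Sθ e₁`, `Sθ e₃` are leading at some `k ≠ j`, and consecutive letters of a word of minimal
length differ, so induction along such a word shows that these columns of `W * Sθ` are leading
at its first letter `j`. Their `j`-th entries are `t`, `u`, `w`.
-/

lemma S_mulVec_eq_update (j : Fin 4) (v : Fin 4 → ℤ) :
    S j *ᵥ v = Function.update v j (2 * ∑ i, v i - 3 * v j) := by
  funext i
  fin_cases j <;> fin_cases i <;> simp [S, mulVec, dotProduct, Fin.sum_univ_four] <;> ring

lemma S_mul_self (j : Fin 4) : S j * S j = 1 := by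
  fin_cases j <;> decide

def IsLeadingAt (v : Fin 4 → ℤ) (k : Fin 4) : Prop :=
  1 ≤ v k ∧ (∀ i, v i ≤ v k) ∧ Pairwise fun i i' => 0 ≤ v i + v i'

instance (v : Fin 4 → ℤ) (k : Fin 4) : Decidable (IsLeadingAt v k) := by
  unfold IsLeadingAt Pairwise; infer_instance

lemma add_le_sum_of_pairwise {v : Fin 4 → ℤ} (hv : Pairwise fun i i' => 0 ≤ v i + v i')
    {j k : Fin 4} (hjk : j ≠ k) : v j + v k ≤ ∑ i, v i := by
  have h01 := hv (show (0 : Fin 4) ≠ 1 by decide)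
  have h02 := hv (show (0 : Fin 4) ≠ 2 by decide)
  have h03 := hv (show (0 : Fin 4) ≠ 3 by decide)
  have h12 := hv (show (1 : Fin 4) ≠ 2 by decide)
  have h13 := hv (show (1 : Fin 4) ≠ 3 by decide)
  have h23 := hv (show (2 : Fin 4) ≠ 3 by decide)
  rw [Fin.sum_univ_four]
  fin_cases j <;> fin_cases k <;> simp at hjk ⊢ <;> omega

theorem IsLeadingAt.S_mulVec {v : Fin 4 → ℤ} {k j : Fin 4} (hv : IsLeadingAt v k)
    (hjk : j ≠ k) : IsLeadingAt (S j *ᵥ v) j := by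
  obtain ⟨hk, hmax, hpair⟩ := hv
  set r := 2 * ∑ i, v i - 3 * v j
  have hkr : v k ≤ r := by
    have := add_le_sum_of_pairwise hpair hjk
    have := hmax j
    omega
  have hr_add : ∀ i, 0 ≤ r + v i := fun i => by
    rcases eq_or_ne i k with rfl | hik
    · omega
    · have := hpair hik.symm
      omega
  rw [S_mulVec_eq_update]
  refine ⟨by simp only [Function.update_self]; omega, fun i => ?_, fun i i' hii' => ?_⟩
  · by_cases hij : i = j
    · simp [hij]
    · simpa [hij] using (hmax i).trans hkr
  · by_cases hij : i = j <;> by_cases hi'j : i' = j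
    · exact absurd (hij.trans hi'j.symm) hii'
    · simpa [hij, hi'j] using hr_add i'
    · simpa [hij, hi'j, add_comm] using hr_add i
    · simpa [hij, hi'j] using hpair hii'

lemma mem_Ap_iff {W : Matrix (Fin 4) (Fin 4) ℤ} :
    W ∈ Ap ↔ ∃ l : List (Fin 4), (l.map S).prod = W := by
  refine ⟨fun hW => ?_, ?_⟩
  · induction hW using Submonoid.closure_induction with
    | mem x hx =>
      simp only [Set.mem_insert_iff, Set.mem_singleton_iff] at hx
      rcases hx with rfl | rfl | rfl | rfl
      exacts [⟨[0], by simp⟩, ⟨[1], by simp⟩, ⟨[2], by simp⟩, ⟨[3], by simp⟩]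
    | one => exact ⟨[], rfl⟩
    | mul x y _ _ hx hy =>
      obtain ⟨l₁, rfl⟩ := hx
      obtain ⟨l₂, rfl⟩ := hy
      exact ⟨l₁ ++ l₂, by simp⟩
  · rintro ⟨l, rfl⟩
    refine Submonoid.list_prod_mem _ fun x hx => ?_
    obtain ⟨g, -, rfl⟩ := List.mem_map.1 hx
    apply Submonoid.subset_closure
    fin_cases g <;> simp

lemma wordLength_prod_le_length (l : List (Fin 4)) : wordLength (l.map S).prod ≤ l.length :=
  Nat.sInf_le ⟨l.get, by simp⟩

lemma exists_prod_eq_and_length_eq_wordLength {W : Matrix (Fin 4) (Fin 4) ℤ} (hW : W ∈ Ap) :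
    ∃ l : List (Fin 4), (l.map S).prod = W ∧ l.length = wordLength W := by
  obtain ⟨l, hl⟩ := mem_Ap_iff.1 hW
  obtain ⟨f, hf⟩ := Nat.sInf_mem
    (s := {k | ∃ f : Fin k → Fin 4, W = (List.ofFn fun i => S (f i)).prod}) ⟨l.length, l.get, by simp [hl]⟩
  exact ⟨List.ofFn f, by rw [List.map_ofFn]; exact hf.symm, List.length_ofFn⟩

theorem isLeadingAt_S_mul_mulVec {v : Fin 4 → ℤ} (hv : ∀ j, ∃ k ≠ j, IsLeadingAt v k)
    {W : Matrix (Fin 4) (Fin 4) ℤ} (hW : W ∈ Ap) {j : Fin 4}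
    (hlen : wordLength W < wordLength (S j * W)) : IsLeadingAt ((S j * W) *ᵥ v) j := by
  induction h : wordLength W using Nat.strong_induction_on generalizing W j with
  | _ n ih =>
  obtain ⟨l, rfl, hl⟩ := exists_prod_eq_and_length_eq_wordLength hW
  rw [← mulVec_mulVec]
  cases l with
  | nil =>
    obtain ⟨k, hkj, hk⟩ := hv j
    simpa using hk.S_mulVec hkj.symm
  | cons k t =>
    rw [List.length_cons] at hl
    simp only [List.map_cons, List.prod_cons] at h hlen hl ⊢
    have ht := wordLength_prod_le_length t
    have hkj : k ≠ j := by
      rintro rfl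
      rw [← mul_assoc, S_mul_self, one_mul] at hlen
      omega
    have hk := ih _ (by omega) (mem_Ap_iff.2 ⟨t, rfl⟩) (j := k) (by omega) rfl
    exact hk.S_mulVec hkj.symm

theorem coefficient_quadruple_positivity_general
    (W W' : Matrix (Fin 4) (Fin 4) ℤ) (j : Fin 4)
    (hW' : W' ∈ Ap)
    (hfac : W = S j * W') (hlen : wordLength W' < wordLength W) :
    (W * Sθ) j 0 < 0 ∧ 0 < (W * Sθ) j 1 ∧ 0 < (W * Sθ) j 3 := by
  subst hfac
  have ht := (isLeadingAt_S_mul_mulVec (v := -Sθᵀ 0) (by decide) hW' hlen).1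
  have hu := (isLeadingAt_S_mul_mulVec (v := Sθᵀ 1) (by decide) hW' hlen).1
  have hw := (isLeadingAt_S_mul_mulVec (v := Sθᵀ 3) (by decide) hW' hlen).1
  rw [mulVec_neg, Pi.neg_apply] at ht
  exact ⟨neg_pos.1 ht, hu, hw⟩

/-- If `W ≠ 1` is in the Apollonian group and its reduced word starts with
`S_j`, then the coefficient quadruple `(t,u,v,w)` read off from row `j` of
`W·S_θ` (whose row is `(−t,u,v,w)`) has `t > 0`, `u > 0`, `w > 0`. -/
theorem coefficient_quadruple_positivity
    (W W' : Matrix (Fin 4) (Fin 4) ℤ) (j : Fin 4)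
    (hW : W ∈ Ap) (hW' : W' ∈ Ap) (hne : W ≠ 1)
    (hfac : W = S j * W') (hlen : wordLength W' < wordLength W) :
    (W * Sθ) j 0 < 0 ∧ 0 < (W * Sθ) j 1 ∧ 0 < (W * Sθ) j 3 :=
  coefficient_quadruple_positivity_general W W' j hW' hfac hlen
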